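/- Generating function identity (formal power series version of Theorem 2.5 with Y = 1): over ℝ[[t]] (with x, λ, m as parameters, m a positive integer), let e_λ(t) = Σ_{n≥0} (1)_{n,λ} t^n/n! and let W_{m,λ}(n,k) be defined by the formal power series identity e_λ(t)·(1/k!)((e_λ^m(t)−1)/m)^k = Σ_{n≥k} W_{m,λ}(n,k) t^n/n!, where e_λ^m(t) = Σ_{n≥0}(m)_{n,λ} t^n/n!. Then Σ_{n≥0} (Σ_{k=0}^{n} W_{m,λ}(n,k) x^k) t^n/n! = e_λ(t) · exp(x(e_λ^m(t)−1)/m) as formal power series in t. -/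

import Mathlib

/-!
Since `g = (e_λ^m(t) - 1)/m` has no constant term, `gᵏ` is divisible by `tᵏ`, so modulo `tⁿ⁺¹` the
exponential `exp(x g)` is its Taylor polynomial `Σ_{k≤n} xᵏ gᵏ/k!`. Hence the `n`-th coefficient of
`e_λ(t) exp(x g)` is `Σ_{k≤n} xᵏ [tⁿ] (e_λ(t) gᵏ/k!) = Σ_{k≤n} xᵏ W(n,k)/n!`.
-/

/-- The degenerate falling factorial `(x)_{n,λ} = x(x-λ)⋯(x-(n-1)λ)`, with `(x)_{0,λ} = 1`. -/
def degFall {R : Type*} [CommRing R] (x lam : R) (n : ℕ) : R :=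
  ∏ i ∈ Finset.range n, (x - (i : R) * lam)

/-- The degenerate exponential `e_λ^a(t) = Σ_{n≥0} (a)_{n,λ} tⁿ/n!` as a formal power series. -/
noncomputable def degExpPS (R : Type*) [CommRing R] [Algebra ℚ R] (a lam : R) : PowerSeries R :=
  PowerSeries.mk fun n => ((n.factorial : ℚ)⁻¹) • degFall a lam n

/-- The formal exponential `exp f = Σ_{k≥0} fᵏ/k!` of a power series `f` with zero constant
term (coefficientwise, only `k ≤ n` contributes to the `n`-th coefficient). -/
noncomputable def expPS (R : Type*) [CommRing R] [Algebra ℚ R] (f : PowerSeries R) :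
    PowerSeries R :=
  PowerSeries.mk fun n =>
    ∑ k ∈ Finset.range (n + 1), ((k.factorial : ℚ)⁻¹) • PowerSeries.coeff n (f ^ k)

open PowerSeries Finset

section

variable {R : Type*} [CommRing R]

theorem coeff_pow_of_constantCoeff_eq_zero {f : PowerSeries R} (hf : constantCoeff f = 0)
    {q k : ℕ} (hqk : q < k) : coeff q (f ^ k) = 0 :=
  X_pow_dvd_iff.mp (pow_dvd_pow_of_dvd (X_dvd_iff.mpr hf) k) q hqk

variable [Algebra ℚ R]

theorem constantCoeff_degExpPS (a lam : R) : constantCoeff (degExpPS R a lam) = 1 := by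
  simp [degExpPS, degFall]

theorem X_pow_dvd_expPS_sub {f : PowerSeries R} (hf : constantCoeff f = 0) (N : ℕ) :
    X ^ N ∣ expPS R f - ∑ k ∈ range N, ((k.factorial : ℚ)⁻¹) • f ^ k := by
  refine X_pow_dvd_iff.mpr fun q hq => ?_
  simp only [map_sub, sub_eq_zero, expPS, coeff_mk, map_sum, coeff_smul]
  refine sum_subset (range_subset_range.mpr (by omega)) fun k _ hk => ?_
  rw [coeff_pow_of_constantCoeff_eq_zero hf (by simpa using hk), smul_zero]

theorem coeff_mul_expPS_C_mul {g : PowerSeries R} (hg : constantCoeff g = 0)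
    (e : PowerSeries R) (x : R) (n : ℕ) :
    coeff n (e * expPS R (C x * g)) =
      ∑ k ∈ range (n + 1), x ^ k * coeff n (((k.factorial : ℚ)⁻¹) • (e * g ^ k)) := by
  have hxg : constantCoeff (C x * g) = 0 := by simp [hg]
  have htrunc := X_pow_dvd_iff.mp
    (dvd_mul_of_dvd_right (X_pow_dvd_expPS_sub hxg (n + 1)) e) n (Nat.lt_succ_self n)
  rw [mul_sub, map_sub, sub_eq_zero, mul_sum, map_sum] at htrunc
  rw [htrunc]
  refine sum_congr rfl fun k _ => ?_
  rw [mul_pow, ← map_pow, mul_smul_comm, mul_left_comm, ← mul_smul_comm, coeff_C_mul]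

end

theorem degDowling_generating_function_general (R : Type*) [CommRing R] [Algebra ℚ R]
    (x lam : R) (m : ℕ) (W : ℕ → ℕ → R)
    (hW : ∀ k : ℕ,
      ((k.factorial : ℚ)⁻¹) •
          (degExpPS R 1 lam * (((m : ℚ)⁻¹) • (degExpPS R (m : R) lam - 1)) ^ k) =
        PowerSeries.mk fun n => if k ≤ n then ((n.factorial : ℚ)⁻¹) • W n k else 0) :
    (PowerSeries.mk fun n =>
        ((n.factorial : ℚ)⁻¹) • ∑ k ∈ Finset.range (n + 1), W n k * x ^ k) =
      degExpPS R 1 lam *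
        expPS R (PowerSeries.C x * (((m : ℚ)⁻¹) • (degExpPS R (m : R) lam - 1))) := by
  have hg : constantCoeff (((m : ℚ)⁻¹) • (degExpPS R (m : R) lam - 1)) = 0 := by
    simp [constantCoeff_degExpPS]
  ext n
  rw [coeff_mul_expPS_C_mul hg, coeff_mk, smul_sum]
  refine sum_congr rfl fun k hk => ?_
  rw [hW, coeff_mk, if_pos (Nat.lt_succ_iff.mp (mem_range.mp hk)), mul_smul_comm, mul_comm]

/-- Generating function of the degenerate Dowling polynomials: if the `W_{m,λ}(n,k)` are
defined by `e_λ(t)·(1/k!)((e_λ^m(t)−1)/m)ᵏ = Σ_{n≥k} W_{m,λ}(n,k) tⁿ/n!`, then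
`Σ_{n≥0} (Σ_{k=0}^n W_{m,λ}(n,k) xᵏ) tⁿ/n! = e_λ(t)·exp(x(e_λ^m(t)−1)/m)`. -/
theorem degDowling_generating_function (R : Type*) [CommRing R] [Algebra ℚ R]
    (x lam : R) (m : ℕ) (hm : 0 < m) (W : ℕ → ℕ → R)
    (hW : ∀ k : ℕ,
      ((k.factorial : ℚ)⁻¹) •
          (degExpPS R 1 lam * (((m : ℚ)⁻¹) • (degExpPS R (m : R) lam - 1)) ^ k) =
        PowerSeries.mk fun n => if k ≤ n then ((n.factorial : ℚ)⁻¹) • W n k else 0) :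
    (PowerSeries.mk fun n =>
        ((n.factorial : ℚ)⁻¹) • ∑ k ∈ Finset.range (n + 1), W n k * x ^ k) =
      degExpPS R 1 lam *
        expPS R (PowerSeries.C x * (((m : ℚ)⁻¹) • (degExpPS R (m : R) lam - 1))) :=
  degDowling_generating_function_general R x lam m W hW
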